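/- Let f : [0,1] → ℝ be a convex continuous function with a unique minimizer x* ∈ (0,1) and f(x*) = 0. For m ∈ ℕ let A_m := {k/2^m : k ∈ {1, …, 2^m − 1}}, and let m* be the smallest m such that A_m ∩ (0, x*] and A_m ∩ [x*, 1) each contain at least 4 elements. For every m ≥ m*, let x_1^m < x_2^m < x_3^m < x_4^m denote the 4 largest elements of A_m ∩ (0, x*] and x_5^m < x_6^m < x_7^m < x_8^m denote the 4 smallest elements of A_m ∩ [x*, 1). Then for every m ≥ m* + 1, max_{i ∈ {1,…,8}} f(x_i^m) ≤ (4/7) · max_{i ∈ {1,…,8}} f(x_i^{m−1}). -/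

import Mathlib

/-- The dyadic mesh of index `m` in `(0,1)`: the points `k / 2^m` for
`k ∈ {1, …, 2^m − 1}`. -/
def dyadicMesh (m : ℕ) : Set ℝ :=
  {y | ∃ k : ℕ, 1 ≤ k ∧ k ≤ 2 ^ m - 1 ∧ y = (k : ℝ) / 2 ^ m}

/-!
Convexity and `f x* = 0` give `f z ≤ c * f y` whenever `y ≤ z ≤ x*` and
`x* - z ≤ c * (x* - y)`. On the left of `x*` this yields `f (u i) ≤ f (u 0)`, and it remains
to see `x* - u 0 ≤ 4/7 * (x* - v 0)`. With `h = 2⁻ᵐ`, the four largest mesh points of index `m` in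
`(0, x*]` are consecutive, so `u 3 = u 0 + 3h` and `x* < u 3 + h`; the coarse points are `2h`
apart and `v 3 ≤ u 3`, hence `x* - v 0 ≥ (x* - u 0) + 3h` while `x* - u 0 < 4h`. The right side
is the mirror image under `y ↦ 1 - y`, which preserves every dyadic mesh.
-/

open Set

theorem mem_dyadicMesh_iff {n : ℕ} {y : ℝ} :
    y ∈ dyadicMesh n ↔ y ∈ Ioo 0 1 ∧ ∃ k : ℤ, y = k / 2 ^ n := by
  have h2 : (0 : ℝ) < 2 ^ n := by positivity
  constructor
  · rintro ⟨k, hk1, hk2, rfl⟩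
    have hk : (k : ℝ) + 1 ≤ 2 ^ n := by
      exact_mod_cast (Nat.le_sub_one_iff_lt (Nat.two_pow_pos n)).1 hk2
    refine ⟨⟨by positivity, ?_⟩, k, by rw [Int.cast_natCast]⟩
    rw [div_lt_one h2]
    linarith
  · rintro ⟨⟨hy0, hy1⟩, k, rfl⟩
    have hk0 : (0 : ℤ) < k := by
      have : (0 : ℝ) < k := (div_pos_iff_of_pos_right h2).1 hy0
      exact_mod_cast this
    have hk1 : k < 2 ^ n := by
      have : (k : ℝ) < 2 ^ n := (div_lt_one h2).1 hy1
      exact_mod_cast this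
    lift k to ℕ using hk0.le
    refine ⟨k, by omega, ?_, by rw [Int.cast_natCast]⟩
    have : k < 2 ^ n := by exact_mod_cast hk1
    omega

theorem dyadicMesh_zero : dyadicMesh 0 = ∅ := by
  ext y
  simp only [dyadicMesh, pow_zero, mem_ofPred_eq, mem_empty_iff_false, iff_false]
  omega

theorem dyadicMesh_subset_succ (n : ℕ) : dyadicMesh n ⊆ dyadicMesh (n + 1) := by
  intro y hy
  obtain ⟨hy, k, rfl⟩ := mem_dyadicMesh_iff.1 hy
  refine mem_dyadicMesh_iff.2 ⟨hy, 2 * k, ?_⟩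
  push_cast
  rw [pow_succ]
  field_simp

theorem one_sub_mem_dyadicMesh_iff {n : ℕ} {y : ℝ} :
    1 - y ∈ dyadicMesh n ↔ y ∈ dyadicMesh n := by
  suffices h : ∀ y : ℝ, y ∈ dyadicMesh n → 1 - y ∈ dyadicMesh n from
    ⟨fun hy => sub_sub_cancel 1 y ▸ h _ hy, h y⟩
  intro y hy
  obtain ⟨⟨hy0, hy1⟩, k, rfl⟩ := mem_dyadicMesh_iff.1 hy
  refine mem_dyadicMesh_iff.2 ⟨⟨by linarith, by linarith⟩, 2 ^ n - k, ?_⟩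
  push_cast
  field_simp

namespace dyadicMesh

variable {n : ℕ} {x p q : ℝ} {a b : Fin 8 → ℝ}

theorem add_inv_le (hp : p ∈ dyadicMesh n) (hq : q ∈ dyadicMesh n) (hpq : p < q) :
    p + (2 ^ n)⁻¹ ≤ q := by
  obtain ⟨-, k, rfl⟩ := mem_dyadicMesh_iff.1 hp
  obtain ⟨-, l, rfl⟩ := mem_dyadicMesh_iff.1 hq
  have h2 : (0 : ℝ) < 2 ^ n := by positivity
  have hkl : (k : ℝ) + 1 ≤ l := by
    exact_mod_cast Int.add_one_le_of_lt (by exact_mod_cast (div_lt_div_iff_of_pos_right h2).1 hpq)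
  rw [div_add' _ _ _ h2.ne', div_le_div_iff_of_pos_right h2]
  simpa using hkl

theorem add_inv_mem (hp : p ∈ dyadicMesh n) (h1 : p + (2 ^ n)⁻¹ < 1) :
    p + (2 ^ n)⁻¹ ∈ dyadicMesh n := by
  obtain ⟨⟨hp0, -⟩, k, rfl⟩ := mem_dyadicMesh_iff.1 hp
  refine mem_dyadicMesh_iff.2 ⟨⟨by positivity, h1⟩, k + 1, ?_⟩
  push_cast
  field_simp

theorem eq_add_inv (hp : p ∈ dyadicMesh n) (hq : q ∈ dyadicMesh n) (hpq : p < q)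
    (hgap : ∀ r ∈ dyadicMesh n, r ∉ Ioo p q) : q = p + (2 ^ n)⁻¹ := by
  refine le_antisymm (not_lt.1 fun hlt => hgap _ ?_ ⟨by simp, hlt⟩) (add_inv_le hp hq hpq)
  exact add_inv_mem hp (hlt.trans (mem_dyadicMesh_iff.1 hq).1.2)

theorem add_three_mul_inv_le (hb : StrictMono b)
    (hb_mem : ∀ i ≤ 3, b i ∈ dyadicMesh n) : b 0 + 3 * (2 ^ n)⁻¹ ≤ b 3 := by
  have gap := fun (i j : Fin 8) (hj : j ≤ 3) (hij : i < j) =>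
    add_inv_le (hb_mem i (hij.le.trans hj)) (hb_mem j hj) (hb hij)
  linarith [gap 0 1 (by decide) (by decide), gap 1 2 (by decide) (by decide),
    gap 2 3 le_rfl (by decide)]

theorem exists_eq_of_inter_Ioi_eq
    (ha_top : (dyadicMesh n ∩ Ioc 0 x) ∩ Ioi (a 0) = {a 1, a 2, a 3}) {r : ℝ}
    (hr : r ∈ dyadicMesh n ∩ Ioc 0 x) (hr0 : a 0 < r) : ∃ j ≤ 3, a j = r := by
  have : r ∈ ({a 1, a 2, a 3} : Set ℝ) := ha_top ▸ ⟨hr, hr0⟩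
  rcases this with rfl | rfl | rfl
  exacts [⟨1, by decide, rfl⟩, ⟨2, by decide, rfl⟩, ⟨3, le_rfl, rfl⟩]

theorem le_of_inter_Ioi_eq (ha : Monotone a)
    (ha_top : (dyadicMesh n ∩ Ioc 0 x) ∩ Ioi (a 0) = {a 1, a 2, a 3}) {r : ℝ}
    (hr : r ∈ dyadicMesh n ∩ Ioc 0 x) : r ≤ a 3 := by
  rcases le_or_gt r (a 0) with hr0 | hr0
  · exact hr0.trans (ha (by decide))
  · obtain ⟨j, hj, rfl⟩ := exists_eq_of_inter_Ioi_eq ha_top hr hr0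
    exact ha hj

theorem lt_add_inv_of_inter_Ioi_eq (hx : x < 1) (ha : Monotone a)
    (ha_mem : a 3 ∈ dyadicMesh n ∩ Ioc 0 x)
    (ha_top : (dyadicMesh n ∩ Ioc 0 x) ∩ Ioi (a 0) = {a 1, a 2, a 3}) :
    x < a 3 + (2 ^ n)⁻¹ := by
  by_contra! hle
  have hpos : (0 : ℝ) < (2 ^ n)⁻¹ := by positivity
  have hmem : a 3 + (2 ^ n)⁻¹ ∈ dyadicMesh n ∩ Ioc 0 x :=
    ⟨add_inv_mem ha_mem.1 (hle.trans_lt hx), by linarith [ha_mem.2.1], hle⟩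
  linarith [le_of_inter_Ioi_eq ha ha_top hmem]

theorem eq_add_inv_of_inter_Ioi_eq (ha : StrictMono a)
    (ha_mem : ∀ i ≤ 3, a i ∈ dyadicMesh n ∩ Ioc 0 x)
    (ha_top : (dyadicMesh n ∩ Ioc 0 x) ∩ Ioi (a 0) = {a 1, a 2, a 3})
    {i j : Fin 8} (hj : j ≤ 3) (hij : (i : ℕ) + 1 = j) : a j = a i + (2 ^ n)⁻¹ := by
  have hi : i ≤ 3 := by rw [Fin.le_def] at hj ⊢; omega
  refine eq_add_inv (ha_mem i hi).1 (ha_mem j hj).1 (ha (by rw [Fin.lt_def]; omega))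
    fun r hr hrij => ?_
  have h0r : a 0 < r := (ha.monotone (Fin.zero_le i)).trans_lt hrij.1
  obtain ⟨k, -, rfl⟩ := exists_eq_of_inter_Ioi_eq ha_top
    ⟨hr, (ha_mem 0 (by decide)).2.1.trans h0r, hrij.2.le.trans (ha_mem j hj).2.2⟩ h0r
  have hik := ha.lt_iff_lt.1 hrij.1
  have hkj := ha.lt_iff_lt.1 hrij.2
  rw [Fin.lt_def] at hik hkj
  omega

theorem eq_add_three_mul_inv_of_inter_Ioi_eq (ha : StrictMono a)
    (ha_mem : ∀ i ≤ 3, a i ∈ dyadicMesh n ∩ Ioc 0 x)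
    (ha_top : (dyadicMesh n ∩ Ioc 0 x) ∩ Ioi (a 0) = {a 1, a 2, a 3}) :
    a 3 = a 0 + 3 * (2 ^ n)⁻¹ := by
  have h1 := eq_add_inv_of_inter_Ioi_eq ha ha_mem ha_top (i := 0) (j := 1) (by decide) rfl
  have h2 := eq_add_inv_of_inter_Ioi_eq ha ha_mem ha_top (i := 1) (j := 2) (by decide) rfl
  have h3 := eq_add_inv_of_inter_Ioi_eq ha ha_mem ha_top (i := 2) (j := 3) le_rfl rfl
  linarith

theorem sub_le_four_sevenths_mul_sub (hx : x < 1)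
    (ha : StrictMono a) (ha_mem : ∀ i ≤ 3, a i ∈ dyadicMesh (n + 1) ∩ Ioc 0 x)
    (ha_top : (dyadicMesh (n + 1) ∩ Ioc 0 x) ∩ Ioi (a 0) = {a 1, a 2, a 3})
    (hb : StrictMono b) (hb_mem : ∀ i ≤ 3, b i ∈ dyadicMesh n ∩ Ioc 0 x) :
    x - a 0 ≤ 4 / 7 * (x - b 0) := by
  have hcoarse : ((2 : ℝ) ^ n)⁻¹ = 2 * (2 ^ (n + 1))⁻¹ := by
    rw [pow_succ]; field_simp
  have hb3 := add_three_mul_inv_le hb fun i hi => (hb_mem i hi).1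
  have hba : b 3 ≤ a 3 := le_of_inter_Ioi_eq ha.monotone ha_top
    ⟨dyadicMesh_subset_succ n (hb_mem 3 le_rfl).1, (hb_mem 3 le_rfl).2⟩
  have ha3 := eq_add_three_mul_inv_of_inter_Ioi_eq ha ha_mem ha_top
  have hxa := lt_add_inv_of_inter_Ioi_eq hx ha.monotone (ha_mem 3 le_rfl) ha_top
  linarith

theorem one_sub_mem_inter_Ioc {w : ℝ} (hw : w ∈ dyadicMesh n ∩ Ico x 1) :
    1 - w ∈ dyadicMesh n ∩ Ioc 0 (1 - x) :=
  ⟨one_sub_mem_dyadicMesh_iff.2 hw.1, by linarith [hw.2.2], by linarith [hw.2.1]⟩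

theorem one_sub_inter_Ioi_eq
    (ha_top : (dyadicMesh n ∩ Ico x 1) ∩ Iio (a 7) = {a 4, a 5, a 6}) :
    (dyadicMesh n ∩ Ioc 0 (1 - x)) ∩ Ioi (1 - a 7) = {1 - a 6, 1 - a 5, 1 - a 4} := by
  ext y
  have hy := congrArg (1 - y ∈ ·) ha_top
  simp only [mem_inter_iff, mem_Ico, mem_Iio, mem_insert_iff, mem_singleton_iff, eq_iff_iff,
    one_sub_mem_dyadicMesh_iff] at hy
  simp only [mem_inter_iff, mem_Ioc, mem_Ioi, mem_insert_iff, mem_singleton_iff]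
  grind

end dyadicMesh

theorem ConvexOn.le_mul_of_sub_le_mul_sub {s : Set ℝ} {f : ℝ → ℝ} (hf : ConvexOn ℝ s f)
    {x y z c : ℝ} (hx : x ∈ s) (hy : y ∈ s) (hfx : f x = 0) (hfy : 0 ≤ f y)
    (hyz : y ≤ z) (hzx : z ≤ x) (hc : x - z ≤ c * (x - y)) : f z ≤ c * f y := by
  rcases hyz.trans hzx |>.eq_or_lt with rfl | hyx
  · rw [le_antisymm hzx hyz]
    simp [hfx]
  set t := (x - z) / (x - y)
  have hxy : 0 < x - y := sub_pos.2 hyx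
  have ht0 : 0 ≤ t := div_nonneg (sub_nonneg.2 hzx) hxy.le
  have htc : t ≤ c := (div_le_iff₀ hxy).2 hc
  have ht1 : t ≤ 1 := (div_le_one hxy).2 (by linarith)
  have hz : t • y + (1 - t) • x = z := by
    simp only [smul_eq_mul, t]; field_simp; ring
  calc f z ≤ t • f y + (1 - t) • f x := hz ▸ hf.2 hy hx ht0 (sub_nonneg.2 ht1) (by ring)
    _ = t * f y := by simp [hfx]
    _ ≤ c * f y := mul_le_mul_of_nonneg_right htc hfy

theorem ConvexOn.comp_one_sub {f : ℝ → ℝ} (hf : ConvexOn ℝ (Icc 0 1) f) :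
    ConvexOn ℝ (Icc 0 1) fun y => f (1 - y) := by
  refine ⟨convex_Icc 0 1, fun y hy z hz a b ha hb hab => ?_⟩
  have hy' : 1 - y ∈ Icc (0 : ℝ) 1 := ⟨by linarith [hy.2], by linarith [hy.1]⟩
  have hz' : 1 - z ∈ Icc (0 : ℝ) 1 := ⟨by linarith [hz.2], by linarith [hz.1]⟩
  convert hf.2 hy' hz' ha hb hab using 2
  simp only [smul_eq_mul]
  linear_combination -hab

section Bounds

variable {f : ℝ → ℝ} {x : ℝ} {n : ℕ} {u v : Fin 8 → ℝ}

theorem le_four_sevenths_mul_of_left (hf : ConvexOn ℝ (Icc 0 1) f) (hx : x < 1)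
    (hfx : f x = 0) (hf_nonneg : ∀ y ∈ Icc (0 : ℝ) 1, 0 ≤ f y)
    (hu : StrictMono u) (hu_mem : ∀ i ≤ 3, u i ∈ dyadicMesh (n + 1) ∩ Ioc 0 x)
    (hu_top : (dyadicMesh (n + 1) ∩ Ioc 0 x) ∩ Ioi (u 0) = {u 1, u 2, u 3})
    (hv : StrictMono v) (hv_mem : ∀ i ≤ 3, v i ∈ dyadicMesh n ∩ Ioc 0 x) :
    ∀ i ≤ 3, f (u i) ≤ 4 / 7 * f (v 0) := by
  intro i hi
  have hu0 := (hu_mem 0 (by decide)).2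
  have hv0 := (hv_mem 0 (by decide)).2
  have hxs : x ∈ Icc (0 : ℝ) 1 := ⟨hu0.1.le.trans hu0.2, hx.le⟩
  have hu0s : u 0 ∈ Icc (0 : ℝ) 1 := ⟨hu0.1.le, hu0.2.trans hxs.2⟩
  have hv0s : v 0 ∈ Icc (0 : ℝ) 1 := ⟨hv0.1.le, hv0.2.trans hxs.2⟩
  have hratio := dyadicMesh.sub_le_four_sevenths_mul_sub hx hu hu_mem hu_top hv hv_mem
  have hui : u 0 ≤ u i := hu.monotone (Fin.zero_le i)
  calc f (u i) ≤ 1 * f (u 0) :=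
        hf.le_mul_of_sub_le_mul_sub hxs hu0s hfx (hf_nonneg _ hu0s) hui (hu_mem i hi).2.2
          (by linarith)
    _ ≤ 4 / 7 * f (v 0) := by
        rw [one_mul]
        exact hf.le_mul_of_sub_le_mul_sub hxs hv0s hfx (hf_nonneg _ hv0s)
          (by linarith [hv0.2]) hu0.2 hratio

theorem le_four_sevenths_mul_of_right (hf : ConvexOn ℝ (Icc 0 1) f) (hx : 0 < x)
    (hfx : f x = 0) (hf_nonneg : ∀ y ∈ Icc (0 : ℝ) 1, 0 ≤ f y)
    (hu : StrictMono u) (hu_mem : ∀ i, 4 ≤ i → u i ∈ dyadicMesh (n + 1) ∩ Ico x 1)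
    (hu_top : (dyadicMesh (n + 1) ∩ Ico x 1) ∩ Iio (u 7) = {u 4, u 5, u 6})
    (hv : StrictMono v) (hv_mem : ∀ i, 4 ≤ i → v i ∈ dyadicMesh n ∩ Ico x 1) :
    ∀ i, 4 ≤ i → f (u i) ≤ 4 / 7 * f (v 7) := by
  intro i hi
  have key := le_four_sevenths_mul_of_left (f := fun y => f (1 - y)) (x := 1 - x)
    (u := fun j => 1 - u j.rev) (v := fun j => 1 - v j.rev) hf.comp_one_sub
    (by linarith) (by simpa using hfx)
    (fun y hy => hf_nonneg _ ⟨by linarith [hy.2], by linarith [hy.1]⟩)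
    (fun j k hjk => sub_lt_sub_left (hu (Fin.rev_lt_rev.2 hjk)) 1)
    (fun j hj => dyadicMesh.one_sub_mem_inter_Ioc
      (hu_mem _ (Fin.rev_le_rev.1 (by simpa using hj))))
    (by simpa using dyadicMesh.one_sub_inter_Ioi_eq hu_top)
    (fun j k hjk => sub_lt_sub_left (hv (Fin.rev_lt_rev.2 hjk)) 1)
    (fun j hj => dyadicMesh.one_sub_mem_inter_Ioc
      (hv_mem _ (Fin.rev_le_rev.1 (by simpa using hj))))
    i.rev (Fin.rev_le_rev.2 hi)
  simpa using key

end Bounds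

theorem claim3_dyadic_contraction_general
    (f : ℝ → ℝ) (hf : ConvexOn ℝ (Set.Icc (0 : ℝ) 1) f)
    (xstar : ℝ) (hxstar : xstar ∈ Set.Ioo (0 : ℝ) 1)
    (hmin : ∀ y ∈ Set.Icc (0 : ℝ) 1, f xstar ≤ f y)
    (hzero : f xstar = 0)
    (m : ℕ)
    (u v : Fin 8 → ℝ) (hu_mono : StrictMono u) (hv_mono : StrictMono v)
    (hu_left : ∀ i : Fin 8, i ≤ 3 → u i ∈ dyadicMesh m ∩ Set.Ioc 0 xstar)
    (hu_left4 : (dyadicMesh m ∩ Set.Ioc 0 xstar) ∩ Set.Ioi (u 0)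
      = {u 1, u 2, u 3})
    (hu_right : ∀ i : Fin 8, 4 ≤ i → u i ∈ dyadicMesh m ∩ Set.Ico xstar 1)
    (hu_right4 : (dyadicMesh m ∩ Set.Ico xstar 1) ∩ Set.Iio (u 7)
      = {u 4, u 5, u 6})
    (hv_left : ∀ i : Fin 8, i ≤ 3 → v i ∈ dyadicMesh (m - 1) ∩ Set.Ioc 0 xstar)
    (hv_right : ∀ i : Fin 8, 4 ≤ i →
      v i ∈ dyadicMesh (m - 1) ∩ Set.Ico xstar 1) :
    Finset.univ.sup' Finset.univ_nonempty (fun i => f (u i)) ≤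
      4 / 7 * Finset.univ.sup' Finset.univ_nonempty (fun i => f (v i)) := by
  obtain ⟨n, rfl⟩ : ∃ n, m = n + 1 := by
    refine Nat.exists_eq_add_one.2 (Nat.pos_of_ne_zero fun hm => ?_)
    simpa [hm, dyadicMesh_zero] using (hu_left 0 (by decide)).1
  rw [Nat.add_sub_cancel] at hv_left hv_right
  have hf_nonneg : ∀ y ∈ Icc (0 : ℝ) 1, 0 ≤ f y := fun y hy => hzero ▸ hmin y hy
  have le_sup (j : Fin 8) : f (v j) ≤ Finset.univ.sup' Finset.univ_nonempty (fun i => f (v i)) :=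
    Finset.le_sup' (fun i => f (v i)) (Finset.mem_univ j)
  refine Finset.sup'_le _ _ fun i _ => ?_
  rcases le_or_gt i 3 with hi | hi
  · exact (le_four_sevenths_mul_of_left hf hxstar.2 hzero hf_nonneg hu_mono hu_left hu_left4
      hv_mono hv_left i hi).trans (by linarith [le_sup 0])
  · exact (le_four_sevenths_mul_of_right hf hxstar.1 hzero hf_nonneg hu_mono hu_right hu_right4
      hv_mono hv_right i hi).trans (by linarith [le_sup 7])

/-- Claim 3 of the paper.  For a convex continuous `f : [0,1] → ℝ` with unique
minimizer `x* ∈ (0,1)` and `f(x*) = 0`, let `m*` be the smallest index such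
that the dyadic mesh of index `m*` has at least 4 points on each side of `x*`
inside `(0,1)`.  For `m ≥ m* + 1`, let `u 0 < ⋯ < u 3 ≤ x*` be the 4 largest
mesh points of index `m` in `(0, x*]` and `x* ≤ u 4 < ⋯ < u 7` the 4 smallest
mesh points of index `m` in `[x*, 1)` (similarly `v` for index `m − 1`).
Then `max_i f(u i) ≤ (4/7) · max_i f(v i)`. -/
theorem claim3_dyadic_contraction
    (f : ℝ → ℝ) (hf : ConvexOn ℝ (Set.Icc (0 : ℝ) 1) f)
    (hcont : ContinuousOn f (Set.Icc (0 : ℝ) 1))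
    (xstar : ℝ) (hxstar : xstar ∈ Set.Ioo (0 : ℝ) 1)
    (hmin : ∀ y ∈ Set.Icc (0 : ℝ) 1, f xstar ≤ f y)
    (huniq : ∀ y ∈ Set.Icc (0 : ℝ) 1, f y = f xstar → y = xstar)
    (hzero : f xstar = 0)
    (mstar : ℕ)
    (hmstar : IsLeast {m : ℕ | 4 ≤ (dyadicMesh m ∩ Set.Ioc 0 xstar).ncard ∧
        4 ≤ (dyadicMesh m ∩ Set.Ico xstar 1).ncard} mstar)
    (m : ℕ) (hm : mstar + 1 ≤ m)
    (u v : Fin 8 → ℝ) (hu_mono : StrictMono u) (hv_mono : StrictMono v)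
    (hu_left : ∀ i : Fin 8, i ≤ 3 → u i ∈ dyadicMesh m ∩ Set.Ioc 0 xstar)
    (hu_left4 : (dyadicMesh m ∩ Set.Ioc 0 xstar) ∩ Set.Ioi (u 0)
      = {u 1, u 2, u 3})
    (hu_right : ∀ i : Fin 8, 4 ≤ i → u i ∈ dyadicMesh m ∩ Set.Ico xstar 1)
    (hu_right4 : (dyadicMesh m ∩ Set.Ico xstar 1) ∩ Set.Iio (u 7)
      = {u 4, u 5, u 6})
    (hv_left : ∀ i : Fin 8, i ≤ 3 → v i ∈ dyadicMesh (m - 1) ∩ Set.Ioc 0 xstar)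
    (hv_left4 : (dyadicMesh (m - 1) ∩ Set.Ioc 0 xstar) ∩ Set.Ioi (v 0)
      = {v 1, v 2, v 3})
    (hv_right : ∀ i : Fin 8, 4 ≤ i →
      v i ∈ dyadicMesh (m - 1) ∩ Set.Ico xstar 1)
    (hv_right4 : (dyadicMesh (m - 1) ∩ Set.Ico xstar 1) ∩ Set.Iio (v 7)
      = {v 4, v 5, v 6}) :
    Finset.univ.sup' Finset.univ_nonempty (fun i => f (u i)) ≤
      4 / 7 * Finset.univ.sup' Finset.univ_nonempty (fun i => f (v i)) :=
  claim3_dyadic_contraction_general f hf xstar hxstar hmin hzero m u v hu_mono hv_mono hu_left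
    hu_left4 hu_right hu_right4 hv_left hv_right
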